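/- Let G be a finite simple graph on vertex set V, with admissible subsets of V×{1,2} defined as those avoiding: {(a,1),(a,2),(b,1),(b,2)} for an edge {a,b}; {(a,1),(b,1),(b,2),(c,1)} for edges {a,b},{b,c} with a ≠ c; and {(a,1),(b,1),(c,1),(d,1)} for disjoint edges {a,b},{c,d}. Suppose {a,b} is a leaf edge of G with free vertex a, and A is a maximal independent set of G \ N_G[b]. Then σ = ({a,b} ∪ A)×{1} ∪ (V \ {a})×{2} is a maximal admissible set. -/

import Mathlib

/-- `σ ⊆ V × {0,1}` is admissible: it avoids the three forbidden
configurations corresponding to the minimal generators `a₁a₂b₁b₂`,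
`a₁b₁b₂c₁`, `a₁b₁c₁d₁` of the polarization of `I(G)²`. -/
def Admissible {V : Type*} (G : SimpleGraph V) (σ : Set (V × Fin 2)) : Prop :=
  (∀ a b : V, G.Adj a b →
    ¬ ((a, 0) ∈ σ ∧ (a, 1) ∈ σ ∧ (b, 0) ∈ σ ∧ (b, 1) ∈ σ)) ∧
  (∀ a b c : V, G.Adj a b → G.Adj b c → a ≠ c →
    ¬ ((a, 0) ∈ σ ∧ (b, 0) ∈ σ ∧ (b, 1) ∈ σ ∧ (c, 0) ∈ σ)) ∧
  (∀ a b c d : V, G.Adj a b → G.Adj c d →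
    a ≠ c → a ≠ d → b ≠ c → b ≠ d →
    ¬ ((a, 0) ∈ σ ∧ (b, 0) ∈ σ ∧ (c, 0) ∈ σ ∧ (d, 0) ∈ σ))

/-- `σ` is a maximal admissible set. -/
def MaximalAdmissible {V : Type*} (G : SimpleGraph V) (σ : Set (V × Fin 2)) : Prop :=
  Admissible G σ ∧ ∀ τ : Set (V × Fin 2), Admissible G τ → σ ⊆ τ → τ = σ

/-- `A` is an independent set of the simple graph `G`. -/
def IsIndep {V : Type*} (G : SimpleGraph V) (A : Set V) : Prop :=
  ∀ a ∈ A, ∀ b ∈ A, ¬ G.Adj a b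

/-- `A` is a maximal independent set of the induced subgraph of `G` on `S`. -/
def IsMaxIndepOn {V : Type*} (G : SimpleGraph V) (S A : Set V) : Prop :=
  A ⊆ S ∧ IsIndep G A ∧ ∀ B : Set V, B ⊆ S → IsIndep G B → A ⊆ B → B = A

/-- The closed neighborhood of a vertex. -/
def closedNbhd {V : Type*} (G : SimpleGraph V) (b : V) : Set V :=
  insert b (G.neighborSet b)


/-!
Inside `S = {a, b} ∪ A` the only edge of `G` is `ab`: `a` is a leaf at `b`, and `A` is an
independent set avoiding `N_G[b]`. With a single edge in the bottom layer, the second and third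
forbidden configurations (which need two distinct edges there) cannot occur, and the first one is
excluded because `(a, 2) ∉ σ`.

For maximality, adding `(a, 2)` creates the configuration `a₁a₂b₁b₂`. Adding `(v, 1)` with
`v ∉ S` creates `v₁b₁b₂a₁` if `v ∼ b`; otherwise `v ∉ N_G[b]`, so by maximality of `A` the
vertex `v` has a neighbour `u ∈ A`, and `vu`, `ab` are disjoint edges giving `v₁u₁a₁b₁`.

The layers `1, 2` of the paper are `0, 1 : Fin 2` in the code.
-/

theorem SimpleGraph.adj_iff_of_neighborSet_eq_singleton {V : Type*} {G : SimpleGraph V}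
    {a b x : V} (hleaf : G.neighborSet a = {b}) : G.Adj a x ↔ x = b :=
  Set.ext_iff.1 hleaf x

section

variable {V : Type*} {G : SimpleGraph V}

theorem IsMaxIndepOn.exists_adj_of_notMem {S A : Set V} (hA : IsMaxIndepOn G S A) {v : V}
    (hvS : v ∈ S) (hvA : v ∉ A) : ∃ u ∈ A, G.Adj v u := by
  obtain ⟨hAS, hAind, hAmax⟩ := hA
  by_contra! hnadj
  have hind : IsIndep G (insert v A) := by
    rintro x (rfl | hx) y (rfl | hy) hxy
    · exact hxy.ne rfl
    · exact hnadj y hy hxy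
    · exact hnadj x hx hxy.symm
    · exact hAind x hx y hy hxy
  have hins := hAmax _ (Set.insert_subset hvS hAS) hind (Set.subset_insert v A)
  exact hvA (hins ▸ Set.mem_insert v A)

theorem mem_prod_union_zero {S T : Set V} {v : V} :
    (v, (0 : Fin 2)) ∈ S ×ˢ ({0} : Set (Fin 2)) ∪ T ×ˢ ({1} : Set (Fin 2)) ↔ v ∈ S := by
  simp

theorem mem_prod_union_one {S T : Set V} {v : V} :
    (v, (1 : Fin 2)) ∈ S ×ˢ ({0} : Set (Fin 2)) ∪ T ×ˢ ({1} : Set (Fin 2)) ↔ v ∈ T := by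
  simp

theorem admissible_prod_union_of_adj_eq {S T : Set V} {a b : V}
    (hS : ∀ x ∈ S, ∀ y ∈ S, G.Adj x y → s(x, y) = s(a, b)) (haT : a ∉ T) :
    Admissible G (S ×ˢ ({0} : Set (Fin 2)) ∪ T ×ˢ ({1} : Set (Fin 2))) := by
  simp only [Admissible, mem_prod_union_zero, mem_prod_union_one]
  refine ⟨?_, ?_, ?_⟩
  · rintro x y hxy ⟨hx, hxT, hy, hyT⟩
    have ha : a ∈ s(x, y) := hS x hx y hy hxy ▸ Sym2.mem_mk_left a b
    rcases Sym2.mem_iff.1 ha with rfl | rfl <;> contradiction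
  · rintro x y z hxy hyz hxz ⟨hx, hy, -, hz⟩
    have hsame : s(x, y) = s(z, y) := by
      rw [hS x hx y hy hxy, ← hS y hy z hz hyz, Sym2.eq_swap]
    exact hxz (Sym2.congr_left.1 hsame)
  · rintro x y z w hxy hzw hxz hxw - - ⟨hx, hy, hz, hw⟩
    have hmem : x ∈ s(z, w) := by
      rw [hS z hz w hw hzw, ← hS x hx y hy hxy]
      exact Sym2.mem_mk_left x y
    rcases Sym2.mem_iff.1 hmem with rfl | rfl <;> contradiction

variable {a b : V} {A : Set V}

theorem adj_eq_of_mem_leaf_union (hleaf : G.neighborSet a = {b})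
    (hAS : A ⊆ (closedNbhd G b)ᶜ) (hAind : IsIndep G A) :
    ∀ x ∈ ({a, b} ∪ A : Set V), ∀ y ∈ ({a, b} ∪ A : Set V),
      G.Adj x y → s(x, y) = s(a, b) := by
  have hAb : ∀ u ∈ A, ¬ G.Adj b u := fun u hu hbu => hAS hu (Or.inr hbu)
  have hadj_a : ∀ {x}, G.Adj a x ↔ x = b := G.adj_iff_of_neighborSet_eq_singleton hleaf
  rintro x ((rfl | rfl) | hx) y ((rfl | rfl) | hy) hxy
  · exact absurd rfl hxy.ne
  · rfl
  · exact absurd (hadj_a.1 hxy ▸ hy) (fun hb => hAS hb (Set.mem_insert _ _))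
  · exact Sym2.eq_swap
  · exact absurd rfl hxy.ne
  · exact absurd hxy (hAb y hy)
  · exact absurd (hadj_a.1 hxy.symm ▸ hx) (fun hb => hAS hb (Set.mem_insert _ _))
  · exact absurd hxy.symm (hAb x hx)
  · exact absurd hxy (hAind x hx y hy)

theorem subset_leaf_of_admissible (hleaf : G.neighborSet a = {b})
    (hA : IsMaxIndepOn G (closedNbhd G b)ᶜ A) {τ : Set (V × Fin 2)} (hτ : Admissible G τ)
    (hsub : ({a, b} ∪ A) ×ˢ ({0} : Set (Fin 2)) ∪ ({a}ᶜ : Set V) ×ˢ ({1} : Set (Fin 2)) ⊆ τ) :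
    τ ⊆ ({a, b} ∪ A) ×ˢ ({0} : Set (Fin 2)) ∪ ({a}ᶜ : Set V) ×ˢ ({1} : Set (Fin 2)) := by
  obtain ⟨hτ₁, hτ₂, hτ₃⟩ := hτ
  have hab : G.Adj a b := (G.adj_iff_of_neighborSet_eq_singleton hleaf).2 rfl
  have hbot : ∀ {v}, v ∈ ({a, b} ∪ A : Set V) → (v, (0 : Fin 2)) ∈ τ :=
    fun hv => hsub (mem_prod_union_zero.2 hv)
  have ha₀ := hbot (Or.inl (Set.mem_insert a _))
  have hb₀ := hbot (Or.inl (Set.mem_insert_of_mem a rfl))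
  have hb₁ : (b, (1 : Fin 2)) ∈ τ := hsub (mem_prod_union_one.2 hab.ne.symm)
  rintro ⟨v, i⟩ hv
  fin_cases i
  · refine mem_prod_union_zero.2 (by_contra fun hvS => ?_)
    have hva : v ≠ a := by rintro rfl; exact hvS (Or.inl (Set.mem_insert v _))
    have hvb : v ≠ b := by rintro rfl; exact hvS (Or.inl (Set.mem_insert_of_mem a rfl))
    by_cases hbv : G.Adj b v
    · exact hτ₂ v b a hbv.symm hab.symm hva ⟨hv, hb₀, hb₁, ha₀⟩
    have hvN : v ∈ (closedNbhd G b)ᶜ := by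
      rintro (h | h)
      exacts [hvb h, hbv h]
    obtain ⟨u, huA, hvu⟩ := hA.exists_adj_of_notMem hvN (fun h => hvS (Or.inr h))
    have huN := hA.1 huA
    have hua : u ≠ a := fun h => huN (Or.inr (h ▸ hab.symm))
    have hub : u ≠ b := fun h => huN (Or.inl h)
    exact hτ₃ v u a b hvu hab hva hvb hua hub ⟨hv, hbot (Or.inr huA), ha₀, hb₀⟩
  · refine mem_prod_union_one.2 fun hva => ?_
    rw [Set.mem_singleton_iff.1 hva] at hv
    exact hτ₁ a b hab ⟨ha₀, hv, hb₀, hb₁⟩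

end

theorem maximalAdmissible_leaf_type_general
    {V : Type*} (G : SimpleGraph V) (a b : V)
    (hleaf : G.neighborSet a = {b}) (A : Set V)
    (hA : IsMaxIndepOn G (closedNbhd G b)ᶜ A) :
    MaximalAdmissible G
      ((({a, b} ∪ A) ×ˢ ({0} : Set (Fin 2))) ∪
        ((({a} : Set V)ᶜ) ×ˢ ({1} : Set (Fin 2)))) :=
  ⟨admissible_prod_union_of_adj_eq
      (adj_eq_of_mem_leaf_union hleaf hA.1 hA.2.1) (fun h => h rfl),
    fun _ hτ hsub => (subset_leaf_of_admissible hleaf hA hτ hsub).antisymm hsub⟩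

/-- Leaf type facets: if `{a,b}` is a leaf edge of `G` with free vertex `a`
(the unique neighbor of `a` is `b`) and `A` is a maximal independent set of
`G \ N_G[b]`, then `σ = ({a,b} ∪ A) × {1} ∪ (V \ {a}) × {2}` is a maximal
admissible set. -/
theorem maximalAdmissible_leaf_type
    {V : Type*} [Fintype V] (G : SimpleGraph V) (a b : V)
    (hleaf : G.neighborSet a = {b}) (A : Set V)
    (hA : IsMaxIndepOn G (closedNbhd G b)ᶜ A) :
    MaximalAdmissible G
      ((({a, b} ∪ A) ×ˢ ({0} : Set (Fin 2))) ∪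
        ((({a} : Set V)ᶜ) ×ˢ ({1} : Set (Fin 2)))) :=
  maximalAdmissible_leaf_type_general G a b hleaf A hA
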